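/- For all integers n₁ > 1 and m₁ ≥ 1 there exists a point x ∈ K with strict itinerary n₁m₁ under R_{b₁}; that is, ‖x − 1‖ < 1/√2, R_{b₁}(x) ∈ Γ_{n₁}, R_{b₁}^{∘(n₁+1)}(x) ∈ Ψ_{m₁}, and R_{b₁}^{∘I₁}(x) = 1, where I₁ = n₁ + 3(m₁ − 1) + 2. -/

import Mathlib

/-!
Write `σ = 1/√2`. Preimages under `f = R_{b₁}` are roots of the quadratic
`z² − (1 + w b₁) z + w / a`; centred at a point `γ`, the norms of its roots are read off the Newton
polygon. The hypothesis that `f^[3]` maps the ball of radius `σ³` around `c₁` onto itself forces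
`‖f c₁ − 1‖ = σ³`. The point `x` is then built backwards from `1`: a preimage of `1` at distance
`σ²` from `c₁`; `m₁ − 1` times three preimages along the cycle `c₁ → f c₁ → f² c₁ → ≈ c₁`, each
taking a distance `r` from `c₁` to `√(r σ³)`, which produces `ρ_{m₁}`; `n₁` preimages near `0`,
each halving the norm; and finally a preimage near `1`.
-/

/-- The sequence `ρ_i = 2^(1/2^i − 3/2)`. -/
noncomputable def rhoSeq (i : ℕ) : ℝ := (2 : ℝ) ^ ((1 : ℝ) / 2 ^ i - 3 / 2)

open Metric Set IsUltrametricDist Polynomial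

local notation "σ" => (1 / √2 : ℝ)

section Ultrametric

variable {E : Type*} [SeminormedAddCommGroup E] [IsUltrametricDist E] {x y : E}

lemma norm_add_eq_left_of_norm_lt (h : ‖y‖ < ‖x‖) : ‖x + y‖ = ‖x‖ := by
  rw [norm_add_eq_max_of_norm_ne_norm h.ne', max_eq_left h.le]

lemma norm_sub_eq_left_of_norm_lt (h : ‖y‖ < ‖x‖) : ‖x - y‖ = ‖x‖ := by
  rw [sub_eq_add_neg]
  exact norm_add_eq_left_of_norm_lt (by rwa [norm_neg])

lemma norm_sub_eq_right_of_norm_lt (h : ‖x‖ < ‖y‖) : ‖x - y‖ = ‖y‖ := by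
  rw [← norm_neg, neg_sub, norm_sub_eq_left_of_norm_lt h]

lemma norm_sub_le_max (x y : E) : ‖x - y‖ ≤ max ‖x‖ ‖y‖ := by
  simpa [sub_eq_add_neg] using norm_add_le_max x (-y)

lemma norm_eq_of_norm_sub_lt (h : ‖x - y‖ < ‖y‖) : ‖x‖ = ‖y‖ := by
  rw [← norm_add_eq_left_of_norm_lt h, add_sub_cancel]

end Ultrametric

section Quadratic

lemma exists_add_eq_mul_eq {K : Type*} [Field K] [IsAlgClosed K] (S P : K) :
    ∃ u v : K, u + v = S ∧ u * v = P := by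
  obtain ⟨u, hu⟩ := IsAlgClosed.exists_root (X ^ 2 - C S * X + C P)
    (by rw [show (X ^ 2 - C S * X + C P : K[X]).degree = 2 by compute_degree!]; decide)
  refine ⟨u, S - u, by ring, ?_⟩
  simp only [IsRoot, eval_add, eval_sub, eval_mul, eval_pow, eval_X, eval_C] at hu
  linear_combination -hu

variable {K : Type*} [NormedField K] [IsUltrametricDist K]

lemma norm_sq_eq_of_root {S P u : K} (hSP : ‖S‖ ^ 2 < ‖P‖) (hu : u ^ 2 - S * u + P = 0) :
    ‖u‖ ^ 2 = ‖P‖ := by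
  have hP : ‖P‖ = ‖u‖ * ‖S - u‖ := by
    rw [← norm_mul]
    congr 1
    linear_combination hu
  have heq : ‖u‖ = ‖S - u‖ := by
    by_contra hne
    have hS : ‖S‖ = max ‖u‖ ‖S - u‖ := by
      simpa using norm_add_eq_max_of_norm_ne_norm hne
    have : ‖P‖ ≤ ‖S‖ ^ 2 := by
      rw [hP, hS, sq]
      exact mul_le_mul (le_max_left _ _) (le_max_right _ _) (norm_nonneg _)
        ((norm_nonneg _).trans (le_max_left _ _))
    linarith
  rw [hP, ← heq, sq]

variable [IsAlgClosed K]

lemma exists_root_norm_sq_eq {S P : K} (hSP : ‖S‖ ^ 2 < ‖P‖) :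
    ∃ u : K, u ^ 2 - S * u + P = 0 ∧ ‖u‖ ^ 2 = ‖P‖ := by
  obtain ⟨u, v, rfl, rfl⟩ := exists_add_eq_mul_eq S P
  have hu : u ^ 2 - (u + v) * u + u * v = 0 := by ring
  exact ⟨u, hu, norm_sq_eq_of_root hSP hu⟩

lemma exists_root_norm_mul_eq {S P : K} (hSP : ‖P‖ < ‖S‖ ^ 2) :
    ∃ u : K, u ^ 2 - S * u + P = 0 ∧ ‖u‖ * ‖S‖ = ‖P‖ := by
  obtain ⟨u, v, rfl, rfl⟩ := exists_add_eq_mul_eq S P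
  have key : ∀ u v : K, ‖u‖ < ‖v‖ →
      ∃ w : K, w ^ 2 - (u + v) * w + u * v = 0 ∧ ‖w‖ * ‖u + v‖ = ‖u * v‖ := by
    intro u v h
    refine ⟨u, by ring, ?_⟩
    rw [add_comm, norm_add_eq_left_of_norm_lt h, norm_mul]
  rcases lt_trichotomy ‖u‖ ‖v‖ with h | h | h
  · exact key u v h
  · have : ‖u + v‖ ≤ ‖u‖ := (norm_add_le_max u v).trans (by rw [h, max_self])
    rw [norm_mul, ← h] at hSP
    nlinarith [norm_nonneg (u + v)]
  · simpa only [add_comm u v, mul_comm u v] using key v u h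

end Quadratic

section Map

variable {K : Type*} [NormedField K] {a b : K} {f : K → K}

lemma apply_mul_denom (hf : ∀ z, f z = (z ^ 2 - z) / (b * z - 1 / a)) {z : K}
    (hz : b * z - 1 / a ≠ 0) : f z * (b * z - 1 / a) = z ^ 2 - z := by
  rw [hf, div_mul_cancel₀ _ hz]

lemma denom_ne_zero_of_apply_ne_zero (hf : ∀ z, f z = (z ^ 2 - z) / (b * z - 1 / a)) {z : K}
    (hz : f z ≠ 0) : b * z - 1 / a ≠ 0 := by
  intro h
  exact hz (by rw [hf, h, div_zero])

lemma apply_sub_apply (hf : ∀ z, f z = (z ^ 2 - z) / (b * z - 1 / a)) {z w : K}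
    (hz : b * z - 1 / a ≠ 0) (hw : b * w - 1 / a ≠ 0) :
    f z - f w = (z - w) * (b * z * w - (z + w) / a + 1 / a) /
      ((b * z - 1 / a) * (b * w - 1 / a)) := by
  rw [hf, hf, div_sub_div _ _ hz hw]
  ring

/-- At a critical point, `f c` equals the ratio of the derivatives of numerator and
denominator of `f`. -/
lemma mul_apply_crit (hf : ∀ z, f z = (z ^ 2 - z) / (b * z - 1 / a)) {c : K}
    (hc : b * c ^ 2 - (2 / a) * c + 1 / a = 0) (hD : b * c - 1 / a ≠ 0) :
    b * f c = 2 * c - 1 := by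
  apply mul_right_cancel₀ hD
  linear_combination b * apply_mul_denom hf hD - hc

lemma apply_eq_of_quadratic (ha : a ≠ 0) (hab : b ≠ 1 / a)
    (hf : ∀ z, f z = (z ^ 2 - z) / (b * z - 1 / a)) {w z : K} (hw : w ≠ 0)
    (hz : z ^ 2 - (1 + w * b) * z + w / a = 0) : f z = w := by
  have hD : b * z - 1 / a ≠ 0 := by
    intro hD
    have hz01 : z * (z - 1) = 0 := by linear_combination hz + w * hD
    rcases mul_eq_zero.1 hz01 with h0 | h1
    · have hwa : w / a = 0 := by linear_combination hz - (z - 1 - w * b) * h0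
      exact hw ((div_eq_zero_iff.mp hwa).resolve_right ha)
    · exact hab (by linear_combination hD - b * h1)
  rw [hf, div_eq_iff hD]
  linear_combination hz

/-- With `z = γ + u`, the equation `f z = w` is a monic quadratic in `u` whose constant term
vanishes when `f γ = w`. -/
lemma apply_add_eq_of_root (ha : a ≠ 0) (hab : b ≠ 1 / a)
    (hf : ∀ z, f z = (z ^ 2 - z) / (b * z - 1 / a)) {w γ u : K} (hw : w ≠ 0)
    (hγ : b * γ - 1 / a ≠ 0)
    (hu : u ^ 2 - (1 + w * b - 2 * γ) * u + (f γ - w) * (b * γ - 1 / a) = 0) :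
    f (γ + u) = w :=
  apply_eq_of_quadratic ha hab hf hw (by linear_combination hu - apply_mul_denom hf hγ)

variable [IsUltrametricDist K] [IsAlgClosed K]

lemma exists_apply_add_eq_of_lt (ha : a ≠ 0) (hab : b ≠ 1 / a)
    (hf : ∀ z, f z = (z ^ 2 - z) / (b * z - 1 / a)) {w γ : K} (hw : w ≠ 0)
    (hγ : b * γ - 1 / a ≠ 0)
    (h : ‖(f γ - w) * (b * γ - 1 / a)‖ < ‖1 + w * b - 2 * γ‖ ^ 2) :
    ∃ u, f (γ + u) = w ∧
      ‖u‖ * ‖1 + w * b - 2 * γ‖ = ‖(f γ - w) * (b * γ - 1 / a)‖ := by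
  obtain ⟨u, hu, hnorm⟩ := exists_root_norm_mul_eq h
  exact ⟨u, apply_add_eq_of_root ha hab hf hw hγ hu, hnorm⟩

lemma exists_apply_add_eq_of_gt (ha : a ≠ 0) (hab : b ≠ 1 / a)
    (hf : ∀ z, f z = (z ^ 2 - z) / (b * z - 1 / a)) {w γ : K} (hw : w ≠ 0)
    (hγ : b * γ - 1 / a ≠ 0)
    (h : ‖1 + w * b - 2 * γ‖ ^ 2 < ‖(f γ - w) * (b * γ - 1 / a)‖) :
    ∃ u, f (γ + u) = w ∧ ‖u‖ ^ 2 = ‖(f γ - w) * (b * γ - 1 / a)‖ := by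
  obtain ⟨u, hu, hnorm⟩ := exists_root_norm_sq_eq h
  exact ⟨u, apply_add_eq_of_root ha hab hf hw hγ hu, hnorm⟩

end Map

section Constants

lemma one_div_sqrt_two_pos : 0 < σ := by positivity

lemma one_div_sqrt_two_lt_one : σ < 1 := by
  rw [div_lt_one (by positivity)]
  exact Real.one_lt_sqrt_two

lemma one_div_sqrt_two_sq : σ ^ 2 = 1 / 2 := by
  rw [div_pow, Real.sq_sqrt (by norm_num)]
  norm_num

lemma one_div_sqrt_two_pow_lt_pow {m n : ℕ} (h : m < n) : σ ^ n < σ ^ m :=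
  pow_lt_pow_right_of_lt_one₀ one_div_sqrt_two_pos one_div_sqrt_two_lt_one h

lemma one_div_sqrt_two_pow_lt {n : ℕ} (h : 1 < n) : σ ^ n < σ := by
  simpa only [pow_one] using one_div_sqrt_two_pow_lt_pow h

lemma one_div_sqrt_two_pow_lt_one {n : ℕ} (h : 0 < n) : σ ^ n < 1 := by
  simpa only [pow_zero] using one_div_sqrt_two_pow_lt_pow h

lemma one_div_sqrt_two_pow_eq_rpow (n : ℕ) : σ ^ n = (2 : ℝ) ^ (-(n : ℝ) / 2) := by
  rw [Real.sqrt_eq_rpow, one_div, ← Real.rpow_neg (by norm_num), ← Real.rpow_natCast,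
    ← Real.rpow_mul (by norm_num)]
  ring_nf

lemma rhoSeq_one : rhoSeq 1 = σ ^ 2 := by
  rw [rhoSeq, one_div_sqrt_two_pow_eq_rpow]
  norm_num

lemma rhoSeq_succ_sq (i : ℕ) : rhoSeq (i + 1) ^ 2 = rhoSeq i * σ ^ 3 := by
  rw [rhoSeq, rhoSeq, one_div_sqrt_two_pow_eq_rpow, ← Real.rpow_natCast,
    ← Real.rpow_mul (by norm_num), ← Real.rpow_add (by norm_num)]
  congr 1
  push_cast
  ring

lemma one_div_sqrt_two_pow_three_lt_rhoSeq (i : ℕ) : σ ^ 3 < rhoSeq i := by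
  rw [rhoSeq, one_div_sqrt_two_pow_eq_rpow, Real.rpow_lt_rpow_left_iff one_lt_two]
  have : (0 : ℝ) < 1 / 2 ^ i := by positivity
  push_cast
  linarith

lemma rhoSeq_lt_one_div_sqrt_two {i : ℕ} (hi : 1 ≤ i) : rhoSeq i < σ := by
  rw [← pow_one σ, rhoSeq, one_div_sqrt_two_pow_eq_rpow, Real.rpow_lt_rpow_left_iff one_lt_two]
  have : (1 : ℝ) / 2 ^ i ≤ 1 / 2 := by
    gcongr
    exact le_self_pow₀ (by norm_num) (by omega)
  push_cast
  linarith

end Constants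

section Setting

variable {K : Type*} [NormedField K] {a b c : K} {f : K → K}

lemma norm_two_mul (h2 : ‖(2 : K)‖ = 1 / 2) (z : K) : ‖2 * z‖ = σ ^ 2 * ‖z‖ := by
  rw [norm_mul, h2, one_div_sqrt_two_sq]

lemma norm_one_div_of_norm_eq_two (ha : ‖a‖ = 2) : ‖1 / a‖ = σ ^ 2 := by
  rw [norm_div, norm_one, ha, one_div_sqrt_two_sq]

lemma ne_zero_of_norm_eq_two (ha : ‖a‖ = 2) : a ≠ 0 :=
  norm_ne_zero_iff.mp (by rw [ha]; norm_num)

lemma ne_one_div_of_norm_eq (ha : ‖a‖ = 2) (hb : ‖b‖ = 1) : b ≠ 1 / a := by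
  intro h
  have := congrArg norm h
  rw [hb, norm_one_div_of_norm_eq_two ha, one_div_sqrt_two_sq] at this
  norm_num at this

variable [IsUltrametricDist K]

lemma norm_denom_of_lt (ha : ‖a‖ = 2) (hb : ‖b‖ = 1) {z : K} (hz : σ ^ 2 < ‖z‖) :
    ‖b * z - 1 / a‖ = ‖z‖ := by
  rw [norm_sub_eq_left_of_norm_lt] <;> rw [norm_mul, hb, one_mul]
  rwa [norm_one_div_of_norm_eq_two ha]

lemma norm_denom_of_gt (ha : ‖a‖ = 2) (hb : ‖b‖ = 1) {z : K} (hz : ‖z‖ < σ ^ 2) :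
    ‖b * z - 1 / a‖ = σ ^ 2 := by
  rw [norm_sub_eq_right_of_norm_lt] <;> rw [norm_one_div_of_norm_eq_two ha]
  rwa [norm_mul, hb, one_mul]

lemma norm_denom_of_norm_eq_one (ha : ‖a‖ = 2) (hb : ‖b‖ = 1) {z : K} (hz : ‖z‖ = 1) :
    ‖b * z - 1 / a‖ = 1 := by
  rw [norm_denom_of_lt ha hb (by rw [hz]; exact one_div_sqrt_two_pow_lt_one two_pos), hz]

lemma norm_apply_sub_apply_le (ha : ‖a‖ = 2) (hb : ‖b‖ = 1)
    (hf : ∀ z, f z = (z ^ 2 - z) / (b * z - 1 / a)) {z w : K} (hz : ‖z‖ = 1) (hw : ‖w‖ = 1) :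
    ‖f z - f w‖ ≤ ‖z - w‖ := by
  have hDz := norm_denom_of_norm_eq_one ha hb hz
  have hDw := norm_denom_of_norm_eq_one ha hb hw
  have h1a := norm_one_div_of_norm_eq_two ha
  have hσ : σ ^ 2 ≤ 1 := (one_div_sqrt_two_pow_lt_one two_pos).le
  have hbracket : ‖b * z * w - (z + w) / a + 1 / a‖ ≤ 1 := by
    refine (norm_add_le_max _ _).trans (max_le ((norm_sub_le_max _ _).trans (max_le ?_ ?_)) ?_)
    · rw [norm_mul, norm_mul, hb, hz, hw, one_mul, one_mul]
    · rw [div_eq_mul_one_div, norm_mul, h1a]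
      exact mul_le_one₀ ((norm_add_le_max _ _).trans (by rw [hz, hw, max_self])) (by positivity) hσ
    · rw [h1a]; exact hσ
  rw [apply_sub_apply hf (norm_ne_zero_iff.mp (by rw [hDz]; norm_num))
    (norm_ne_zero_iff.mp (by rw [hDw]; norm_num)), norm_div, norm_mul, norm_mul, hDz, hDw,
    mul_one, div_one]
  exact mul_le_of_le_one_right (norm_nonneg _) hbracket

lemma norm_apply_of_norm_eq_one (ha : ‖a‖ = 2) (hb : ‖b‖ = 1)
    (hf : ∀ z, f z = (z ^ 2 - z) / (b * z - 1 / a)) {z : K} (hz : ‖z‖ = 1) :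
    ‖f z‖ = ‖z - 1‖ := by
  rw [hf, norm_div, norm_denom_of_norm_eq_one ha hb hz, div_one,
    show z ^ 2 - z = z * (z - 1) by ring, norm_mul, hz, one_mul]

lemma norm_eq_of_norm_apply_eq (ha : ‖a‖ = 2) (hb : ‖b‖ = 1)
    (hf : ∀ z, f z = (z ^ 2 - z) / (b * z - 1 / a)) {z : K} (hz : ‖z‖ < 1)
    (hfz : ‖f z‖ = σ) : ‖z‖ = σ ^ 3 := by
  have hD := denom_ne_zero_of_apply_ne_zero hf
    (norm_ne_zero_iff.mp (by rw [hfz]; exact one_div_sqrt_two_pos.ne'))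
  have hz1 : ‖z - 1‖ = 1 := by
    rw [norm_sub_eq_right_of_norm_lt (by rwa [norm_one]), norm_one]
  have key : σ * ‖b * z - 1 / a‖ = ‖z‖ := by
    rw [← hfz, ← norm_mul, apply_mul_denom hf hD, show z ^ 2 - z = z * (z - 1) by ring,
      norm_mul, hz1, mul_one]
  have hlt : ‖b * z‖ < ‖b * z - 1 / a‖ := by
    rw [norm_mul, hb, one_mul, ← key]
    exact mul_lt_of_lt_one_left (norm_pos_iff.2 hD) one_div_sqrt_two_lt_one
  have hD' : ‖b * z - 1 / a‖ = σ ^ 2 := by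
    have := norm_sub_eq_right_of_norm_lt hlt
    rwa [sub_sub_cancel, norm_one_div_of_norm_eq_two ha, eq_comm] at this
  rw [← key, hD']
  ring

lemma norm_crit (h2 : ‖(2 : K)‖ = 1 / 2) (ha : ‖a‖ = 2) (hb : ‖b‖ = 1)
    (hc : b * c ^ 2 - (2 / a) * c + 1 / a = 0) : ‖c‖ = σ := by
  have hroot : (b * c) ^ 2 - (2 / a) * (b * c) + b / a = 0 := by linear_combination b * hc
  have h2a : ‖2 / a‖ = σ ^ 4 := by
    rw [norm_div, h2, ha, show σ ^ 4 = (σ ^ 2) ^ 2 by ring, one_div_sqrt_two_sq]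
    norm_num
  have hba : ‖b / a‖ = σ ^ 2 := by
    rw [div_eq_mul_one_div, norm_mul, hb, one_mul, norm_one_div_of_norm_eq_two ha]
  have hsq := norm_sq_eq_of_root (by
    rw [h2a, hba, ← pow_mul]; exact one_div_sqrt_two_pow_lt_pow (by norm_num)) hroot
  rw [norm_mul, hb, one_mul, hba] at hsq
  exact (sq_eq_sq₀ (norm_nonneg _) one_div_sqrt_two_pos.le).1 hsq

lemma norm_denom_crit (h2 : ‖(2 : K)‖ = 1 / 2) (ha : ‖a‖ = 2) (hb : ‖b‖ = 1)
    (hc : b * c ^ 2 - (2 / a) * c + 1 / a = 0) : ‖b * c - 1 / a‖ = σ := by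
  rw [norm_denom_of_lt ha hb, norm_crit h2 ha hb hc]
  rw [norm_crit h2 ha hb hc]
  exact one_div_sqrt_two_pow_lt one_lt_two

lemma one_add_apply_crit_mul (h2 : ‖(2 : K)‖ = 1 / 2) (ha : ‖a‖ = 2) (hb : ‖b‖ = 1)
    (hf : ∀ z, f z = (z ^ 2 - z) / (b * z - 1 / a))
    (hc : b * c ^ 2 - (2 / a) * c + 1 / a = 0) : 1 + f c * b = 2 * c := by
  have hD := norm_denom_crit h2 ha hb hc
  linear_combination mul_apply_crit hf hc
    (norm_ne_zero_iff.mp (by rw [hD]; exact one_div_sqrt_two_pos.ne'))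

lemma norm_two_mul_crit (h2 : ‖(2 : K)‖ = 1 / 2) (ha : ‖a‖ = 2) (hb : ‖b‖ = 1)
    (hc : b * c ^ 2 - (2 / a) * c + 1 / a = 0) : ‖2 * c‖ = σ ^ 3 := by
  rw [norm_two_mul h2, norm_crit h2 ha hb hc]
  ring

lemma norm_apply_crit (h2 : ‖(2 : K)‖ = 1 / 2) (ha : ‖a‖ = 2) (hb : ‖b‖ = 1)
    (hf : ∀ z, f z = (z ^ 2 - z) / (b * z - 1 / a))
    (hc : b * c ^ 2 - (2 / a) * c + 1 / a = 0) : ‖f c‖ = 1 := by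
  have hD := norm_denom_crit h2 ha hb hc
  calc ‖f c‖ = ‖b * f c‖ := by rw [norm_mul, hb, one_mul]
    _ = ‖2 * c - 1‖ := by
      rw [mul_apply_crit hf hc (norm_ne_zero_iff.mp (by rw [hD]; exact one_div_sqrt_two_pos.ne'))]
    _ = 1 := by
      rw [norm_sub_eq_right_of_norm_lt, norm_one]
      rw [norm_two_mul_crit h2 ha hb hc, norm_one]
      exact one_div_sqrt_two_pow_lt_one (by norm_num)

lemma norm_apply_sub_apply_crit_le (h2 : ‖(2 : K)‖ = 1 / 2) (ha : ‖a‖ = 2) (hb : ‖b‖ = 1)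
    (hf : ∀ z, f z = (z ^ 2 - z) / (b * z - 1 / a))
    (hc : b * c ^ 2 - (2 / a) * c + 1 / a = 0) {z : K} (hz : ‖z - c‖ ≤ σ ^ 3) :
    ‖f z - f c‖ ≤ σ ^ 5 := by
  have hσ := one_div_sqrt_two_pos
  have hDc := norm_denom_crit h2 ha hb hc
  have hDz : ‖b * z - 1 / a‖ = σ := by
    rw [show b * z - 1 / a = (b * c - 1 / a) + b * (z - c) by ring,
      norm_add_eq_left_of_norm_lt, hDc]
    rw [hDc, norm_mul, hb, one_mul]
    exact hz.trans_lt (one_div_sqrt_two_pow_lt (by norm_num))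
  -- since `c` is critical, the bracket of `apply_sub_apply` vanishes at `z = c`
  rw [apply_sub_apply hf (norm_ne_zero_iff.mp (by rw [hDz]; exact hσ.ne'))
      (norm_ne_zero_iff.mp (by rw [hDc]; exact hσ.ne')),
    show b * z * c - (z + c) / a + 1 / a = (z - c) * (b * c - 1 / a) by linear_combination hc,
    norm_div, norm_mul, norm_mul, norm_mul, hDz, hDc]
  calc ‖z - c‖ * (‖z - c‖ * σ) / (σ * σ) = ‖z - c‖ ^ 2 / σ := by field_simp
    _ ≤ (σ ^ 3) ^ 2 / σ := by gcongr
    _ = σ ^ 5 := by field_simp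

/-- If `‖f (f c)‖ = 1`, then `f` is `1`-Lipschitz near `f c` and `f (f c)`, so `f^[3]` shrinks
the ball of radius `σ ^ 3` around `c` into one of radius `σ ^ 5`, and cannot map it onto itself. -/
lemma norm_apply_apply_crit_ne_one (h2 : ‖(2 : K)‖ = 1 / 2) (ha : ‖a‖ = 2) (hb : ‖b‖ = 1)
    (hf : ∀ z, f z = (z ^ 2 - z) / (b * z - 1 / a))
    (hc : b * c ^ 2 - (2 / a) * c + 1 / a = 0)
    (hsurj : closedBall c (σ ^ 3) ⊆ f^[3] '' closedBall c (σ ^ 3)) : ‖f (f c)‖ ≠ 1 := by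
  intro hffc
  have hfc := norm_apply_crit h2 ha hb hf hc
  have hσ5 : σ ^ 5 < 1 := one_div_sqrt_two_pow_lt_one (by norm_num)
  have hcontract : ∀ z ∈ closedBall c (σ ^ 3), ‖f^[3] z - f^[3] c‖ ≤ σ ^ 5 := by
    intro z hz
    rw [mem_closedBall, dist_eq_norm] at hz
    have h₁ := norm_apply_sub_apply_crit_le h2 ha hb hf hc hz
    have hfz : ‖f z‖ = 1 := (norm_eq_of_norm_sub_lt (by rw [hfc]; exact h₁.trans_lt hσ5)).trans hfc
    have h₂ := (norm_apply_sub_apply_le ha hb hf hfz hfc).trans h₁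
    have hffz : ‖f (f z)‖ = 1 :=
      (norm_eq_of_norm_sub_lt (by rw [hffc]; exact h₂.trans_lt hσ5)).trans hffc
    exact (norm_apply_sub_apply_le ha hb hf hffz hffc).trans h₂
  have h2c := norm_two_mul_crit h2 ha hb hc
  obtain ⟨z, hz, hzc⟩ := hsurj (mem_closedBall_self (by positivity))
  obtain ⟨z', hz', hz'c⟩ := hsurj (show c + 2 * c ∈ closedBall c (σ ^ 3) by
    rw [mem_closedBall, dist_eq_norm, add_sub_cancel_left, h2c])
  have : ‖2 * c‖ ≤ σ ^ 5 := by
    rw [show 2 * c = (f^[3] z' - f^[3] c) - (f^[3] z - f^[3] c) by rw [hzc, hz'c]; ring]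
    exact (norm_sub_le_max _ _).trans (max_le (hcontract z' hz') (hcontract z hz))
  rw [h2c] at this
  exact this.not_gt (one_div_sqrt_two_pow_lt_pow (by norm_num))

lemma norm_apply_crit_sub_one (h2 : ‖(2 : K)‖ = 1 / 2) (ha : ‖a‖ = 2) (hb : ‖b‖ = 1)
    (hf : ∀ z, f z = (z ^ 2 - z) / (b * z - 1 / a))
    (hc : b * c ^ 2 - (2 / a) * c + 1 / a = 0) (h3 : ‖f (f (f c)) - c‖ ≤ σ ^ 3)
    (hsurj : closedBall c (σ ^ 3) ⊆ f^[3] '' closedBall c (σ ^ 3)) : ‖f c - 1‖ = σ ^ 3 := by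
  have hc' := norm_crit h2 ha hb hc
  have hffc : ‖f (f c)‖ = ‖f c - 1‖ :=
    norm_apply_of_norm_eq_one ha hb hf (norm_apply_crit h2 ha hb hf hc)
  have hfffc : ‖f (f (f c))‖ = σ :=
    (norm_eq_of_norm_sub_lt (by
      rw [hc']; exact h3.trans_lt (one_div_sqrt_two_pow_lt (by norm_num)))).trans hc'
  have hlt : ‖f (f c)‖ < 1 := by
    refine lt_of_le_of_ne ?_ (norm_apply_apply_crit_ne_one h2 ha hb hf hc hsurj)
    rw [hffc]
    exact (norm_sub_le_max _ _).trans (by rw [norm_apply_crit h2 ha hb hf hc, norm_one, max_self])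
  rw [← hffc]
  exact norm_eq_of_norm_apply_eq ha hb hf hlt hfffc

lemma norm_apply_apply_crit (h2 : ‖(2 : K)‖ = 1 / 2) (ha : ‖a‖ = 2) (hb : ‖b‖ = 1)
    (hf : ∀ z, f z = (z ^ 2 - z) / (b * z - 1 / a))
    (hc : b * c ^ 2 - (2 / a) * c + 1 / a = 0) (h1 : ‖f c - 1‖ = σ ^ 3) :
    ‖f (f c)‖ = σ ^ 3 := by
  rw [norm_apply_of_norm_eq_one ha hb hf (norm_apply_crit h2 ha hb hf hc), h1]

variable [IsAlgClosed K]

lemma exists_apply_eq_near_crit (h2 : ‖(2 : K)‖ = 1 / 2) (ha : ‖a‖ = 2) (hb : ‖b‖ = 1)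
    (hf : ∀ z, f z = (z ^ 2 - z) / (b * z - 1 / a))
    (hc : b * c ^ 2 - (2 / a) * c + 1 / a = 0) {s : ℝ} {q : K} (hs : σ ^ 5 < s)
    (hs' : s ≤ σ ^ 3) (hq : ‖q - f c‖ = s) : ∃ y, f y = q ∧ ‖y - c‖ ^ 2 = s * σ := by
  have hfc := norm_apply_crit h2 ha hb hf hc
  have hDc := norm_denom_crit h2 ha hb hc
  have hq0 : q ≠ 0 := by
    refine norm_ne_zero_iff.mp (ne_of_eq_of_ne (norm_eq_of_norm_sub_lt ?_) (by rw [hfc]; norm_num))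
    rw [hq, hfc]
    exact hs'.trans_lt (one_div_sqrt_two_pow_lt_one (by norm_num))
  have hS : ‖1 + q * b - 2 * c‖ ≤ σ ^ 3 := by
    rw [show 1 + q * b - 2 * c = (1 + f c * b) + (q - f c) * b - 2 * c by ring,
      one_add_apply_crit_mul h2 ha hb hf hc]
    refine (norm_sub_le_max _ _).trans (max_le ((norm_add_le_max _ _).trans (max_le ?_ ?_)) ?_)
    · rw [norm_two_mul_crit h2 ha hb hc]
    · rwa [norm_mul, hb, mul_one, hq]
    · rw [norm_two_mul_crit h2 ha hb hc]
  have hP : ‖(f c - q) * (b * c - 1 / a)‖ = s * σ := by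
    rw [norm_mul, hDc, norm_sub_rev, hq]
  obtain ⟨u, hu, hnorm⟩ := exists_apply_add_eq_of_gt (ne_zero_of_norm_eq_two ha)
    (ne_one_div_of_norm_eq ha hb) hf hq0
    (norm_ne_zero_iff.mp (by rw [hDc]; exact one_div_sqrt_two_pos.ne')) (by
      rw [hP]
      calc ‖1 + q * b - 2 * c‖ ^ 2 ≤ (σ ^ 3) ^ 2 := by gcongr
        _ = σ ^ 5 * σ := by ring
        _ < s * σ := by gcongr)
  exact ⟨c + u, hu, by rw [add_sub_cancel_left, hnorm, hP]⟩

lemma exists_apply_eq_near_apply_crit (h2 : ‖(2 : K)‖ = 1 / 2) (ha : ‖a‖ = 2) (hb : ‖b‖ = 1)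
    (hf : ∀ z, f z = (z ^ 2 - z) / (b * z - 1 / a))
    (hc : b * c ^ 2 - (2 / a) * c + 1 / a = 0) (h1 : ‖f c - 1‖ = σ ^ 3) {s : ℝ} {p : K}
    (hs : s < σ ^ 3) (hp : ‖p - f (f c)‖ = s) : ∃ q, f q = p ∧ ‖q - f c‖ = s := by
  have hfc := norm_apply_crit h2 ha hb hf hc
  have hffc := norm_apply_apply_crit h2 ha hb hf hc h1
  have hσ3 : σ ^ 3 < 1 := one_div_sqrt_two_pow_lt_one (by norm_num)
  have hpn : ‖p‖ = σ ^ 3 := (norm_eq_of_norm_sub_lt (by rwa [hp, hffc])).trans hffc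
  have h1p : ‖1 + p * b‖ = 1 := by
    rw [norm_add_eq_left_of_norm_lt] <;> rw [norm_one]
    rwa [norm_mul, hb, mul_one, hpn]
  have hS : ‖1 + p * b - 2 * f c‖ = 1 := by
    rw [norm_sub_eq_left_of_norm_lt] <;> rw [h1p]
    rw [norm_two_mul h2, hfc, mul_one]
    exact one_div_sqrt_two_pow_lt_one two_pos
  have hP : ‖(f (f c) - p) * (b * f c - 1 / a)‖ = s := by
    rw [norm_mul, norm_denom_of_norm_eq_one ha hb hfc, mul_one, norm_sub_rev, hp]
  obtain ⟨u, hu, hnorm⟩ := exists_apply_add_eq_of_lt (ne_zero_of_norm_eq_two ha)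
    (ne_one_div_of_norm_eq ha hb) hf (norm_ne_zero_iff.mp (by rw [hpn]; positivity))
    (norm_ne_zero_iff.mp (by rw [norm_denom_of_norm_eq_one ha hb hfc]; norm_num))
    (by rw [hP, hS, one_pow]; exact hs.trans hσ3)
  exact ⟨f c + u, hu, by rw [add_sub_cancel_left, ← hP, ← hnorm, hS, mul_one]⟩

lemma exists_apply_eq_near_apply_apply_crit (h2 : ‖(2 : K)‖ = 1 / 2) (ha : ‖a‖ = 2)
    (hb : ‖b‖ = 1) (hf : ∀ z, f z = (z ^ 2 - z) / (b * z - 1 / a))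
    (hc : b * c ^ 2 - (2 / a) * c + 1 / a = 0) (h1 : ‖f c - 1‖ = σ ^ 3)
    (h3 : ‖f (f (f c)) - c‖ ≤ σ ^ 3) {r : ℝ} {y : K} (hr : σ ^ 3 < r) (hr' : r < σ)
    (hy : ‖y - c‖ = r) : ∃ p, f p = y ∧ ‖p - f (f c)‖ = r * σ ^ 2 := by
  have hc' := norm_crit h2 ha hb hc
  have hffc := norm_apply_apply_crit h2 ha hb hf hc h1
  have hyn : ‖y‖ = σ := (norm_eq_of_norm_sub_lt (by rwa [hy, hc'])).trans hc'
  have hD : ‖b * f (f c) - 1 / a‖ = σ ^ 2 :=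
    norm_denom_of_gt ha hb (by rw [hffc]; exact one_div_sqrt_two_pow_lt_pow (by norm_num))
  have h1y : ‖1 + y * b‖ = 1 := by
    rw [norm_add_eq_left_of_norm_lt] <;> rw [norm_one]
    rw [norm_mul, hb, mul_one, hyn]
    exact one_div_sqrt_two_lt_one
  have hS : ‖1 + y * b - 2 * f (f c)‖ = 1 := by
    rw [norm_sub_eq_left_of_norm_lt] <;> rw [h1y]
    rw [norm_two_mul h2, hffc, ← pow_add]
    exact one_div_sqrt_two_pow_lt_one (by norm_num)
  have hP : ‖(f (f (f c)) - y) * (b * f (f c) - 1 / a)‖ = r * σ ^ 2 := by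
    rw [norm_mul, hD, show f (f (f c)) - y = (f (f (f c)) - c) - (y - c) by ring,
      norm_sub_eq_right_of_norm_lt (by rw [hy]; exact h3.trans_lt hr), hy]
  obtain ⟨u, hu, hnorm⟩ := exists_apply_add_eq_of_lt (ne_zero_of_norm_eq_two ha)
    (ne_one_div_of_norm_eq ha hb) hf (norm_ne_zero_iff.mp (by rw [hyn]; positivity))
    (norm_ne_zero_iff.mp (by rw [hD]; positivity)) (by
      rw [hP, hS, one_pow]
      exact mul_lt_one_of_nonneg_of_lt_one_left ((pow_pos one_div_sqrt_two_pos 3).trans hr).le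
        (hr'.trans one_div_sqrt_two_lt_one) (one_div_sqrt_two_pow_lt_one two_pos).le)
  exact ⟨f (f c) + u, hu, by rw [add_sub_cancel_left, ← hP, ← hnorm, hS, mul_one]⟩

lemma exists_iterate_three_eq_near_crit (h2 : ‖(2 : K)‖ = 1 / 2) (ha : ‖a‖ = 2)
    (hb : ‖b‖ = 1) (hf : ∀ z, f z = (z ^ 2 - z) / (b * z - 1 / a))
    (hc : b * c ^ 2 - (2 / a) * c + 1 / a = 0) (h1 : ‖f c - 1‖ = σ ^ 3)
    (h3 : ‖f (f (f c)) - c‖ ≤ σ ^ 3) {r : ℝ} {y : K} (hr : σ ^ 3 < r) (hr' : r < σ)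
    (hy : ‖y - c‖ = r) : ∃ y', f^[3] y' = y ∧ ‖y' - c‖ ^ 2 = r * σ ^ 3 := by
  have hσ2 : 0 < σ ^ 2 := by positivity
  obtain ⟨p, hpy, hp⟩ := exists_apply_eq_near_apply_apply_crit h2 ha hb hf hc h1 h3 hr hr' hy
  obtain ⟨q, hqp, hq⟩ := exists_apply_eq_near_apply_crit h2 ha hb hf hc h1
    (by simpa only [← pow_succ'] using mul_lt_mul_of_pos_right hr' hσ2) hp
  obtain ⟨y', hy'q, hy'⟩ := exists_apply_eq_near_crit h2 ha hb hf hc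
    (by simpa only [← pow_add] using mul_lt_mul_of_pos_right hr hσ2)
    (by simpa only [← pow_succ'] using (mul_lt_mul_of_pos_right hr' hσ2).le) hq
  refine ⟨y', ?_, by rw [hy']; ring⟩
  change f (f (f y')) = y
  rw [hy'q, hqp, hpy]

lemma exists_iterate_eq_one_near_crit (h2 : ‖(2 : K)‖ = 1 / 2) (ha : ‖a‖ = 2)
    (hb : ‖b‖ = 1) (hf : ∀ z, f z = (z ^ 2 - z) / (b * z - 1 / a))
    (hc : b * c ^ 2 - (2 / a) * c + 1 / a = 0) (h1 : ‖f c - 1‖ = σ ^ 3)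
    (h3 : ‖f (f (f c)) - c‖ ≤ σ ^ 3) (j : ℕ) :
    ∃ y, f^[3 * j + 1] y = 1 ∧ ‖y - c‖ = rhoSeq (j + 1) := by
  induction j with
  | zero =>
    obtain ⟨y, hy1, hy⟩ := exists_apply_eq_near_crit h2 ha hb hf hc
      (one_div_sqrt_two_pow_lt_pow (by norm_num)) le_rfl (by rwa [norm_sub_rev])
    refine ⟨y, hy1, ?_⟩
    rw [rhoSeq_one]
    exact (sq_eq_sq₀ (norm_nonneg _) (by positivity)).1 (by rw [hy]; ring)
  | succ j ih =>
    obtain ⟨y, hy1, hy⟩ := ih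
    obtain ⟨y', hy'y, hy'⟩ := exists_iterate_three_eq_near_crit h2 ha hb hf hc h1 h3
      (one_div_sqrt_two_pow_three_lt_rhoSeq _) (rhoSeq_lt_one_div_sqrt_two (by omega)) hy
    refine ⟨y', ?_, (sq_eq_sq₀ (norm_nonneg _) (by unfold rhoSeq; positivity)).1 ?_⟩
    · rw [show 3 * (j + 1) + 1 = (3 * j + 1) + 3 by ring, Function.iterate_add_apply, hy'y, hy1]
    · rw [hy', rhoSeq_succ_sq]

lemma exists_apply_eq_near_zero (ha : ‖a‖ = 2) (hb : ‖b‖ = 1)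
    (hf : ∀ z, f z = (z ^ 2 - z) / (b * z - 1 / a)) {w : K} (hw0 : w ≠ 0) (hw : ‖w‖ < 1) :
    ∃ z, f z = w ∧ ‖z‖ = ‖w‖ * σ ^ 2 := by
  have hD : ‖b * 0 - 1 / a‖ = σ ^ 2 := norm_denom_of_gt ha hb (by rw [norm_zero]; positivity)
  have hS : ‖1 + w * b - 2 * 0‖ = 1 := by
    rw [mul_zero, sub_zero, norm_add_eq_left_of_norm_lt] <;> rw [norm_one]
    rwa [norm_mul, hb, mul_one]
  have hP : ‖(f 0 - w) * (b * 0 - 1 / a)‖ = ‖w‖ * σ ^ 2 := by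
    rw [norm_mul, hD, show f 0 = 0 by simp [hf], zero_sub, norm_neg]
  obtain ⟨u, hu, hnorm⟩ := exists_apply_add_eq_of_lt (ne_zero_of_norm_eq_two ha)
    (ne_one_div_of_norm_eq ha hb) hf hw0 (norm_ne_zero_iff.mp (by rw [hD]; positivity)) (by
      rw [hP, hS, one_pow]
      exact mul_lt_one_of_nonneg_of_lt_one_left (norm_nonneg _) hw
        (one_div_sqrt_two_pow_lt_one two_pos).le)
  exact ⟨u, by rwa [zero_add] at hu, by rw [← hP, ← hnorm, hS, mul_one]⟩

lemma exists_apply_eq_near_one (ha : ‖a‖ = 2) (hb : ‖b‖ = 1)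
    (hf : ∀ z, f z = (z ^ 2 - z) / (b * z - 1 / a)) {w : K} (hw0 : w ≠ 0) (hw : ‖w‖ < 1) :
    ∃ x, f x = w ∧ ‖x - 1‖ = ‖w‖ := by
  have hD : ‖b * 1 - 1 / a‖ = 1 := norm_denom_of_norm_eq_one ha hb norm_one
  have hS : ‖1 + w * b - 2 * 1‖ = 1 := by
    rw [show 1 + w * b - 2 * 1 = w * b - 1 by ring, norm_sub_eq_right_of_norm_lt] <;>
      rw [norm_one]
    rwa [norm_mul, hb, mul_one]
  have hP : ‖(f 1 - w) * (b * 1 - 1 / a)‖ = ‖w‖ := by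
    rw [norm_mul, hD, mul_one, show f 1 = 0 by simp [hf], zero_sub, norm_neg]
  obtain ⟨u, hu, hnorm⟩ := exists_apply_add_eq_of_lt (ne_zero_of_norm_eq_two ha)
    (ne_one_div_of_norm_eq ha hb) hf hw0 (norm_ne_zero_iff.mp (by rw [hD]; norm_num))
    (by rwa [hP, hS, one_pow])
  exact ⟨1 + u, hu, by rw [add_sub_cancel_left, ← hP, ← hnorm, hS, mul_one]⟩

lemma exists_iterate_eq_of_norm_eq (ha : ‖a‖ = 2) (hb : ‖b‖ = 1)
    (hf : ∀ z, f z = (z ^ 2 - z) / (b * z - 1 / a)) {Y : K} (hY : ‖Y‖ = σ) (n : ℕ) :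
    ∃ g, f^[n] g = Y ∧ ‖g‖ = σ ^ (2 * n + 1) := by
  induction n with
  | zero => exact ⟨Y, rfl, by rw [hY]; ring⟩
  | succ n ih =>
    obtain ⟨g, hgY, hg⟩ := ih
    obtain ⟨g', hg'g, hg'⟩ := exists_apply_eq_near_zero ha hb hf
      (norm_ne_zero_iff.mp (by rw [hg]; positivity))
      (by rw [hg]; exact one_div_sqrt_two_pow_lt_one (by omega))
    exact ⟨g', by rw [Function.iterate_succ_apply, hg'g, hgY], by rw [hg', hg]; ring⟩

end Setting

theorem exists_point_with_strict_itinerary_general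
    {K : Type*} [NormedField K] [IsAlgClosed K] [IsUltrametricDist K]
    (h2 : ‖(2 : K)‖ = 1 / 2)
    (a b₁ c₁ : K) (ha : ‖a‖ = 2) (hb₁ : ‖b₁‖ = 1)
    (R : K → K → K) (hRdef : ∀ β z, R β z = (z ^ 2 - z) / (β * z - 1 / a))
    (hc₁ : b₁ * c₁ ^ 2 - (2 / a) * c₁ + 1 / a = 0)
    (hper : (R b₁)^[3] '' Metric.closedBall c₁ (1 / (2 * Real.sqrt 2)) =
      Metric.closedBall c₁ (1 / (2 * Real.sqrt 2)))
    (n₁ m₁ : ℕ) (hn₁ : 1 < n₁) (hm₁ : 1 ≤ m₁) :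
    ∃ x : K, ‖x - 1‖ < 1 / Real.sqrt 2 ∧
      ‖R b₁ x‖ = ((2 : ℝ) ^ n₁)⁻¹ / Real.sqrt 2 ∧
      ‖(R b₁)^[n₁ + 1] x - c₁‖ = rhoSeq m₁ ∧
      (R b₁)^[n₁ + 3 * (m₁ - 1) + 2] x = 1 := by
  have hf := hRdef b₁
  rw [show 1 / (2 * √2) = σ ^ 3 by
    rw [div_pow, one_pow, pow_succ, Real.sq_sqrt zero_le_two]] at hper
  have h3 : ‖R b₁ (R b₁ (R b₁ c₁)) - c₁‖ ≤ σ ^ 3 := by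
    have := hper.subset (mem_image_of_mem _ (mem_closedBall_self (by positivity)))
    rwa [mem_closedBall, dist_eq_norm] at this
  have h1 := norm_apply_crit_sub_one h2 ha hb₁ hf hc₁ h3 hper.superset
  obtain ⟨Y, hY1, hYc⟩ := exists_iterate_eq_one_near_crit h2 ha hb₁ hf hc₁ h1 h3 (m₁ - 1)
  rw [Nat.sub_add_cancel hm₁] at hYc
  have hY : ‖Y‖ = σ := by
    have hc := norm_crit h2 ha hb₁ hc₁
    exact (norm_eq_of_norm_sub_lt (by rw [hYc, hc]; exact rhoSeq_lt_one_div_sqrt_two hm₁)).trans hc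
  obtain ⟨t, htY, ht⟩ := exists_iterate_eq_of_norm_eq ha hb₁ hf hY n₁
  obtain ⟨x, hxt, hx⟩ := exists_apply_eq_near_one ha hb₁ hf
    (norm_ne_zero_iff.mp (by rw [ht]; positivity))
    (by rw [ht]; exact one_div_sqrt_two_pow_lt_one (by omega))
  have hxY : (R b₁)^[n₁ + 1] x = Y := by rw [Function.iterate_succ_apply, hxt, htY]
  refine ⟨x, ?_, ?_, by rw [hxY, hYc], ?_⟩
  · rw [hx, ht]
    exact one_div_sqrt_two_pow_lt (by omega)
  · rw [hxt, ht, pow_succ, pow_mul, one_div_sqrt_two_sq, one_div_pow, one_div, mul_one_div]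
  · rw [show n₁ + 3 * (m₁ - 1) + 2 = (3 * (m₁ - 1) + 1) + (n₁ + 1) by omega,
      Function.iterate_add_apply, hxY, hY1]

/-- For all integers `n₁ > 1` and `m₁ ≥ 1` there is a point `x` with
strict itinerary `n₁m₁` under `R_{b₁}`: `‖x − 1‖ < 1/√2`, `R_{b₁}(x) ∈ Γ_{n₁}`,
`R_{b₁}^{∘(n₁+1)}(x) ∈ Ψ_{m₁}`, and `R_{b₁}^{∘(n₁+3(m₁−1)+2)}(x) = 1`. -/
theorem exists_point_with_strict_itinerary
    {K : Type*} [NormedField K] [CompleteSpace K] [IsAlgClosed K] [IsUltrametricDist K]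
    (h2 : ‖(2 : K)‖ = 1 / 2)
    (a b₁ c₁ : K) (ha : ‖a‖ = 2) (hb₁ : ‖b₁‖ = 1)
    (R : K → K → K) (hRdef : ∀ β z, R β z = (z ^ 2 - z) / (β * z - 1 / a))
    (hc₁ : b₁ * c₁ ^ 2 - (2 / a) * c₁ + 1 / a = 0)
    (hper : (R b₁)^[3] '' Metric.closedBall c₁ (1 / (2 * Real.sqrt 2)) =
      Metric.closedBall c₁ (1 / (2 * Real.sqrt 2)))
    (n₁ m₁ : ℕ) (hn₁ : 1 < n₁) (hm₁ : 1 ≤ m₁) :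
    ∃ x : K, ‖x - 1‖ < 1 / Real.sqrt 2 ∧
      ‖R b₁ x‖ = ((2 : ℝ) ^ n₁)⁻¹ / Real.sqrt 2 ∧
      ‖(R b₁)^[n₁ + 1] x - c₁‖ = rhoSeq m₁ ∧
      (R b₁)^[n₁ + 3 * (m₁ - 1) + 2] x = 1 :=
  exists_point_with_strict_itinerary_general h2 a b₁ c₁ ha hb₁ R hRdef hc₁ hper n₁ m₁ hn₁ hm₁
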